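/- The Cobb-Douglas function f(x) = ∏_{i=1}^n x_i^{α_i} with α_i > 0 and ∑_i α_i ≤ 1 is concave on the nonnegative orthant. -/

import Mathlib

/-!
Weighted AM-GM, with the slack weight `1 - ∑ α` put on the constant `1`, gives at
`c = a x + b y` the supergradient bound `f z ≤ f c * (∑ α i * (z i / c i) + (1 - ∑ α))`.
The bracket is affine in `z`, so averaging it over `z = x, y` with weights `a, b` gives
`a f x + b f y ≤ f c * (∑ α i * (c i / c i) + (1 - ∑ α)) ≤ f c`. The boundary of the orthant
needs no separate treatment: where `c i = 0` also `x i = y i = 0`, and the junk value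
`0 / 0 = 0` keeps `x i = c i * (x i / c i)` true.
-/

open Finset Real

namespace Real

variable {ι : Type*}

theorem geom_mean_le_arith_mean_weighted_of_sum_le_one (s : Finset ι) (w z : ι → ℝ)
    (hw : ∀ i ∈ s, 0 ≤ w i) (hw' : ∑ i ∈ s, w i ≤ 1) (hz : ∀ i ∈ s, 0 ≤ z i) :
    ∏ i ∈ s, z i ^ w i ≤ ∑ i ∈ s, w i * z i + (1 - ∑ i ∈ s, w i) := by
  have h := geom_mean_le_arith_mean_weighted s.insertNone
    (fun o => o.elim (1 - ∑ i ∈ s, w i) w) (fun o => o.elim 1 z)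
    (forall_mem_insertNone.2 ⟨sub_nonneg.2 hw', hw⟩) (by simp)
    (forall_mem_insertNone.2 ⟨zero_le_one, hz⟩)
  simpa [add_comm] using h

theorem prod_rpow_eq_prod_rpow_mul_prod_div_rpow (s : Finset ι) (α x c : ι → ℝ)
    (hc : ∀ i ∈ s, 0 ≤ c i) (hx : ∀ i ∈ s, 0 ≤ x i) (hxc : ∀ i ∈ s, c i = 0 → x i = 0) :
    ∏ i ∈ s, x i ^ α i = (∏ i ∈ s, c i ^ α i) * ∏ i ∈ s, (x i / c i) ^ α i := by
  rw [← prod_mul_distrib]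
  refine prod_congr rfl fun i hi => ?_
  rw [← mul_rpow (hc i hi) (div_nonneg (hx i hi) (hc i hi))]
  rcases eq_or_ne (c i) 0 with h | h
  · simp [h, hxc i hi h]
  · rw [mul_div_cancel₀ _ h]

theorem prod_rpow_le_prod_rpow_mul_sum_div (s : Finset ι) (α x c : ι → ℝ)
    (hα : ∀ i ∈ s, 0 ≤ α i) (hα' : ∑ i ∈ s, α i ≤ 1) (hc : ∀ i ∈ s, 0 ≤ c i)
    (hx : ∀ i ∈ s, 0 ≤ x i) (hxc : ∀ i ∈ s, c i = 0 → x i = 0) :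
    ∏ i ∈ s, x i ^ α i ≤
      (∏ i ∈ s, c i ^ α i) * (∑ i ∈ s, α i * (x i / c i) + (1 - ∑ i ∈ s, α i)) := by
  rw [prod_rpow_eq_prod_rpow_mul_prod_div_rpow s α x c hc hx hxc]
  exact mul_le_mul_of_nonneg_left
    (geom_mean_le_arith_mean_weighted_of_sum_le_one s α _ hα hα'
      fun i hi => div_nonneg (hx i hi) (hc i hi))
    (prod_nonneg fun i hi => rpow_nonneg (hc i hi) _)

end Real

theorem cobb_douglas_concaveOn_general
    (n : ℕ) (α : Fin n → ℝ) (hα : ∀ i, 0 < α i) (hsum : ∑ i, α i ≤ 1) :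
    ConcaveOn ℝ {x : Fin n → ℝ | ∀ i, 0 ≤ x i} (fun x => ∏ i, (x i) ^ (α i)) := by
  refine concaveOn_iff_forall_pos.2 ⟨convex_Ici 0, fun x hx y hy a b ha hb hab => ?_⟩
  set c := a • x + b • y
  have hc_apply (i : Fin n) : c i = a * x i + b * y i := rfl
  have hc (i : Fin n) : 0 ≤ c i := (convex_Ici 0 hx hy ha.le hb.le hab) i
  have hxc (i : Fin n) (_ : i ∈ univ) (h : c i = 0) : x i = 0 := by
    nlinarith [hx i, hy i, hc_apply i]
  have hyc (i : Fin n) (_ : i ∈ univ) (h : c i = 0) : y i = 0 := by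
    nlinarith [hx i, hy i, hc_apply i]
  have hsupx := prod_rpow_le_prod_rpow_mul_sum_div univ α x c (fun i _ => (hα i).le) hsum
    (fun i _ => hc i) (fun i _ => hx i) hxc
  have hsupy := prod_rpow_le_prod_rpow_mul_sum_div univ α y c (fun i _ => (hα i).le) hsum
    (fun i _ => hc i) (fun i _ => hy i) hyc
  have hsplit : ∑ i, α i * (c i / c i) =
      a * ∑ i, α i * (x i / c i) + b * ∑ i, α i * (y i / c i) := by
    simp only [mul_sum, ← sum_add_distrib, hc_apply]
    exact sum_congr rfl fun i _ => by ring
  calc a • ∏ i, x i ^ α i + b • ∏ i, y i ^ α i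
      ≤ a * ((∏ i, c i ^ α i) * (∑ i, α i * (x i / c i) + (1 - ∑ i, α i))) +
          b * ((∏ i, c i ^ α i) * (∑ i, α i * (y i / c i) + (1 - ∑ i, α i))) := by
        simp only [smul_eq_mul]; gcongr
    _ = (∏ i, c i ^ α i) * (∑ i, α i * (c i / c i) + (1 - ∑ i, α i)) := by
        rw [hsplit]; linear_combination (∏ i, c i ^ α i) * (1 - ∑ i, α i) * hab
    _ ≤ (∏ i, c i ^ α i) * (∑ i, α i + (1 - ∑ i, α i)) := by
        gcongr
        · exact prod_nonneg fun i _ => rpow_nonneg (hc i) _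
        · exact mul_le_of_le_one_right (hα i).le (div_self_le_one _)
    _ = ∏ i, c i ^ α i := by ring

/-- The Cobb-Douglas function with positive exponents summing to at most 1 is concave on
the nonnegative orthant. -/
theorem cobb_douglas_concaveOn
    (n : ℕ) (hn : 1 ≤ n) (α : Fin n → ℝ) (hα : ∀ i, 0 < α i) (hsum : ∑ i, α i ≤ 1) :
    ConcaveOn ℝ {x : Fin n → ℝ | ∀ i, 0 ≤ x i} (fun x => ∏ i, (x i) ^ (α i)) :=
  cobb_douglas_concaveOn_general n α hα hsum
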